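/- arXiv:2505.10514 — 7 statements merged into one kernel-verified Lean document; each statement's English description precedes it below -/
import Mathlib

section
/- Let a_0 = 1, a_n(δ) = δ^n/(n!(μ+θ_s)^n), and suppose R := δ·v − a_1(δ)·c > 0 where a_1(δ) = δ/(μ+θ_s). Define g(K) = R · Σ_{n=0}^{K-1} a_n(δ) / Σ_{n=0}^{K} a_n(δ). Then g(K+1) ≥ g(K) for all 1 ≤ K ≤ m−1. In other words, the gain of the fixed-rate cutoff policy is non-decreasing in the threshold K over the range of server states, whenever the per-state net reward R is positive. -/
/-- if the per-state net reward `R = δ·v − a_1(δ)·c` is positive, the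
cutoff-policy gain `g(K) = R·(∑_{n<K} a_n)/(∑_{n≤K} a_n)` is non-decreasing for
`1 ≤ K ≤ m−1`. -/
theorem cutoff_gain_monotone
    (m : ℕ) (hm : 2 ≤ m) (μ θs δ v c : ℝ)
    (h : 0 < μ + θs) (hδ : 0 < δ) (hc : 0 ≤ c)
    (a : ℕ → ℝ) (ha : ∀ n, a n = ∏ i ∈ Finset.Icc 1 n, δ / ((i : ℝ) * (μ + θs)))
    (R : ℝ) (hR : R = δ * v - (δ / (μ + θs)) * c) (hRpos : 0 < R)
    (g : ℕ → ℝ)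
    (hg : ∀ K, g K = R * (∑ n ∈ Finset.range K, a n) / ∑ n ∈ Finset.range (K + 1), a n) :
    ∀ K, 1 ≤ K → K ≤ m - 1 → g K ≤ g (K + 1) := by
  -- positivity of a
  have hapos : ∀ n, 0 < a n := by
    intro n
    rw [ha n]
    apply Finset.prod_pos
    intro i hi
    have hi1 : 1 ≤ i := (Finset.mem_Icc.mp hi).1
    have : (0:ℝ) < (i:ℝ) := by exact_mod_cast hi1
    positivity
  -- recurrence
  have hsucc : ∀ n, a (n + 1) = a n * (δ / ((n + 1 : ℕ) * (μ + θs))) := by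
    intro n
    rw [ha, ha, Finset.prod_Icc_succ_top (Nat.le_add_left 1 n)]
  -- sums
  set S : ℕ → ℝ := fun K => ∑ n ∈ Finset.range K, a n with hS
  have hSpos : ∀ K, 1 ≤ K → 0 < S K := by
    intro K hK
    apply Finset.sum_pos (fun i _ => hapos i)
    exact ⟨0, Finset.mem_range.mpr hK⟩
  have hSsucc : ∀ K, S (K + 1) = S K + a K := fun K => Finset.sum_range_succ a K
  -- key log-concavity inequality
  have key : ∀ n K, n ≤ K → a (K + 1) * a n ≤ a K * a (n + 1) := by
    intro n K hnK
    rw [hsucc, hsucc]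
    have h1 : δ / ((K + 1 : ℕ) * (μ + θs)) ≤ δ / ((n + 1 : ℕ) * (μ + θs)) := by
      apply div_le_div_of_nonneg_left hδ.le
      · have : (0:ℝ) < (n + 1 : ℕ) := by exact_mod_cast Nat.succ_pos n
        positivity
      · apply mul_le_mul_of_nonneg_right _ h.le
        exact_mod_cast Nat.succ_le_succ hnK
    calc a K * (δ / ((K + 1 : ℕ) * (μ + θs))) * a n
        ≤ a K * (δ / ((n + 1 : ℕ) * (μ + θs))) * a n := by
          apply mul_le_mul_of_nonneg_right _ (hapos n).le
          exact mul_le_mul_of_nonneg_left h1 (hapos K).le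
      _ = a K * (a n * (δ / ((n + 1 : ℕ) * (μ + θs)))) := by ring
  -- main concavity of S : S K * S (K+2) ≤ S (K+1) ^ 2
  have main : ∀ K, S K * S (K + 2) ≤ S (K + 1) * S (K + 1) := by
    intro K
    have h1 : a (K + 1) * S K ≤ a K * S (K + 1) := by
      have h2 : ∑ n ∈ Finset.range K, a (K + 1) * a n
          ≤ ∑ n ∈ Finset.range K, a K * a (n + 1) := by
        apply Finset.sum_le_sum
        intro n hn
        exact key n K (Nat.le_of_lt_succ (Nat.lt_succ_of_lt (Finset.mem_range.mp hn)))
      have h3 : ∑ n ∈ Finset.range K, a (n + 1) ≤ S (K + 1) := by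
        have := Finset.sum_range_succ' a K
        have ha0 : 0 < a 0 := hapos 0
        simp only [hS]
        rw [this]
        linarith
      calc a (K + 1) * S K = ∑ n ∈ Finset.range K, a (K + 1) * a n := by
            rw [← Finset.mul_sum]
        _ ≤ ∑ n ∈ Finset.range K, a K * a (n + 1) := h2
        _ = a K * ∑ n ∈ Finset.range K, a (n + 1) := by rw [← Finset.mul_sum]
        _ ≤ a K * S (K + 1) := mul_le_mul_of_nonneg_left h3 (hapos K).le
    have e1 := hSsucc K
    have e2 : S (K + 2) = S (K + 1) + a (K + 1) := hSsucc (K + 1)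
    calc S K * S (K + 2) = S K * S (K + 1) + a (K + 1) * S K := by rw [e2]; ring
      _ ≤ S K * S (K + 1) + a K * S (K + 1) := by linarith
      _ = S (K + 1) * S (K + 1) := by rw [e1]; ring
  intro K hK _
  rw [hg K, hg (K + 1)]
  have p1 : 0 < S (K + 1) := hSpos _ (Nat.le_succ_of_le hK)
  have p2 : 0 < S (K + 2) := hSpos _ (Nat.le_succ_of_le (Nat.le_succ_of_le hK))
  rw [div_le_div_iff₀ p1 p2]
  have := main K
  nlinarith [hSpos K hK]
end

section
/- Define the per-state effective reward R_n(λ) = λ·F̄⁻¹(λ/Λ) − λ·C_s for n < m and R_n(λ) = λ·F̄⁻¹(λ/Λ) − λ·[ (γ_m/γ_{n+1})·C_s + ((γ_{n+1}−γ_m)/γ_{n+1})·C_q ] for m ≤ n < N, where C_s = (c_h+c_sθ_s)/(μ+θ_s) and C_q = c_h/θ_q + c_q. Then the long-run average gain of any policy λ⃗ satisfies g(λ⃗) = Σ_{n=0}^{N-1} λ_n F̄⁻¹(λ_n/Λ) P_n(λ⃗) − Σ_{n=1}^N [n c_h + min{n,m} c_s θ_s + max{n−m,0} c_q θ_q] P_n(λ⃗)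 = Σ_{n=0}^{N-1} R_n(λ_n) P_n(λ⃗), where P_n(λ⃗) is the stationary distribution of the induced birth-death chain (using detailed balance λ_{n-1}P_{n-1} = γ_n P_n). -/
/-- reformulation of the long-run average gain in terms of the
per-state effective rewards `R_n(λ)`. -/
theorem gain_reformulation
    (N m : ℕ) (hm : 1 ≤ m) (hmN : m ≤ N)
    (μ θs θq Λ ch cs cq : ℝ)
    (hμ : 0 < μ) (hθq : 0 < θq) (hθs : 0 ≤ θs)
    (hch : 0 ≤ ch) (hcs : 0 ≤ cs) (hcq : 0 ≤ cq) (hΛ : 0 < Λ)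
    (Fbarinv : ℝ → ℝ)
    (γ : ℕ → ℝ)
    (hγ : ∀ n, γ n = ((min n m : ℕ) : ℝ) * (μ + θs) + ((n - m : ℕ) : ℝ) * θq)
    (Cs Cq : ℝ) (hCs : Cs = (ch + cs * θs) / (μ + θs)) (hCq : Cq = ch / θq + cq)
    (R : ℕ → ℝ → ℝ)
    (hR1 : ∀ n l, n < m → R n l = l * Fbarinv (l / Λ) - l * Cs)
    (hR2 : ∀ n l, m ≤ n → n < N → R n l =
      l * Fbarinv (l / Λ)
        - l * (γ m / γ (n + 1) * Cs + (γ (n + 1) - γ m) / γ (n + 1) * Cq))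
    (lam : ℕ → ℝ) (hlam : ∀ n, 0 ≤ lam n ∧ lam n ≤ Λ) (hlamN : lam N = 0)
    (a P : ℕ → ℝ) (ha0 : a 0 = 1)
    (ha : ∀ n, 1 ≤ n → n ≤ N → a n = a (n - 1) * lam (n - 1) / γ n)
    (hP : ∀ n, P n = a n / ∑ k ∈ Finset.range (N + 1), a k) :
    (∑ n ∈ Finset.range N, lam n * Fbarinv (lam n / Λ) * P n)
      - (∑ n ∈ Finset.Icc 1 N,
          ((n : ℝ) * ch + ((min n m : ℕ) : ℝ) * cs * θs + ((n - m : ℕ) : ℝ) * cq * θq) * P n)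
      = ∑ n ∈ Finset.range N, R n (lam n) * P n := by
  have hμθ : (0:ℝ) < μ + θs := by linarith
  have hγpos : ∀ k, 1 ≤ k → 0 < γ k := by
    intro k hk
    rw [hγ k]
    have h1 : (1:ℝ) ≤ ((min k m : ℕ) : ℝ) := by
      have : 1 ≤ min k m := le_min hk hm
      exact_mod_cast this
    have h2 : (0:ℝ) ≤ ((k - m : ℕ) : ℝ) := by positivity
    nlinarith
  -- reindex the cost sum
  have hshift :
      (∑ n ∈ Finset.Icc 1 N,
          ((n : ℝ) * ch + ((min n m : ℕ) : ℝ) * cs * θs + ((n - m : ℕ) : ℝ) * cq * θq) * P n)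
        = ∑ n ∈ Finset.range N,
          (((n+1 : ℕ) : ℝ) * ch + ((min (n+1) m : ℕ) : ℝ) * cs * θs
              + ((n+1 - m : ℕ) : ℝ) * cq * θq) * P (n+1) := by
    rw [← Finset.Ico_add_one_right_eq_Icc, Finset.sum_Ico_eq_sum_range]
    simp [Nat.add_comm]
  rw [hshift, ← Finset.sum_sub_distrib]
  apply Finset.sum_congr rfl
  intro n hn
  have hnN : n < N := Finset.mem_range.mp hn
  have hΓpos : 0 < γ (n+1) := hγpos (n+1) (by omega)
  have hΓne : γ (n+1) ≠ 0 := ne_of_gt hΓpos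
  have han : a (n+1) = a n * lam n / γ (n+1) := by
    have := ha (n+1) (by omega) (by omega)
    simpa using this
  have key : lam n * Fbarinv (lam n / Λ) * a n
      - (((n+1 : ℕ) : ℝ) * ch + ((min (n+1) m : ℕ) : ℝ) * cs * θs
          + ((n+1 - m : ℕ) : ℝ) * cq * θq) * a (n+1)
      = R n (lam n) * a n := by
    rcases lt_or_ge n m with hcase | hcase
    · -- n < m, so n+1 ≤ m
      have hmin : min (n+1) m = n+1 := min_eq_left (by omega)
      have hsub : n + 1 - m = 0 := by omega
      have hΓ : γ (n+1) = ((n:ℝ)+1) * (μ + θs) := by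
        rw [hγ (n+1), hmin, hsub]; push_cast; ring
      rw [hR1 n (lam n) hcase, han, hmin, hsub, hΓ]
      have hn1 : ((n:ℝ)+1) ≠ 0 := by positivity
      rw [hCs]
      push_cast
      field_simp
      ring
    · -- m ≤ n
      have hmin : min (n+1) m = m := min_eq_right (by omega)
      have hγm : γ m = (m:ℝ) * (μ + θs) := by
        rw [hγ m]; simp
      have hΓ : γ (n+1) = (m:ℝ) * (μ + θs) + (((n+1-m : ℕ)):ℝ) * θq := by
        rw [hγ (n+1), hmin]
      have hcast : (((n+1-m : ℕ)):ℝ) = (n:ℝ) + 1 - (m:ℝ) := by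
        have : m ≤ n + 1 := by omega
        push_cast [this]; ring
      rw [hR2 n (lam n) hcase hnN, han, hmin, hγm]
      have hΓne' : (m:ℝ) * (μ + θs) + ((n:ℝ) + 1 - (m:ℝ)) * θq ≠ 0 := by
        rw [← hcast, ← hΓ]; exact hΓne
      rw [hΓ, hcast, hCs, hCq]
      push_cast
      field_simp
      ring
  rw [hP n, hP (n+1), ← mul_div_assoc, ← mul_div_assoc, ← mul_div_assoc, ← sub_div, key]
end

section
/- The map n ↦ (γ_{n+1} − γ_m)/γ_{n+1} is non-decreasing for n ≥ m−1, where γ_n = min{n,m}(μ+θ_s) + max{n−m,0}θ_q. Consequently, if C_s ≤ C_q then the convex-combination cost coefficient (γ_m/γ_{n+1})·C_s + ((γ_{n+1}−γ_m)/γ_{n+1})·C_q is non-decreasing in n for n ≥ m−1, and it equals C_s when n = m−1; hence for each fixed λ ≥ 0, the effective reward R_n(λ) (as defined via these coefficients) is non-increasing in n over 0 ≤ n < N. -/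
/-- monotonicity of the cost coefficients and of the effective reward
`R_n(λ)` in `n` when `C_s ≤ C_q`. -/
theorem coeff_monotone
    (N m : ℕ) (hm : 1 ≤ m) (hmN : m < N)
    (μ θs θq : ℝ) (hμ : 0 < μ) (hθq : 0 < θq) (hθs : 0 ≤ θs)
    (Cs Cq v : ℝ) (hC : Cs ≤ Cq)
    (γ : ℕ → ℝ)
    (hγ : ∀ n, γ n = ((min n m : ℕ) : ℝ) * (μ + θs) + ((n - m : ℕ) : ℝ) * θq)
    (R : ℕ → ℝ → ℝ)
    (hR1 : ∀ n l, n < m → R n l = l * v - l * Cs)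
    (hR2 : ∀ n l, m ≤ n → n < N → R n l =
      l * v - l * (γ m / γ (n + 1) * Cs + (γ (n + 1) - γ m) / γ (n + 1) * Cq)) :
    (∀ n n' : ℕ, m - 1 ≤ n → n ≤ n' →
      (γ (n + 1) - γ m) / γ (n + 1) ≤ (γ (n' + 1) - γ m) / γ (n' + 1)) ∧
    (∀ n n' : ℕ, m - 1 ≤ n → n ≤ n' →
      γ m / γ (n + 1) * Cs + (γ (n + 1) - γ m) / γ (n + 1) * Cq ≤
        γ m / γ (n' + 1) * Cs + (γ (n' + 1) - γ m) / γ (n' + 1) * Cq) ∧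
    (γ m / γ (m - 1 + 1) * Cs + (γ (m - 1 + 1) - γ m) / γ (m - 1 + 1) * Cq = Cs) ∧
    (∀ l : ℝ, 0 ≤ l → ∀ n n' : ℕ, n ≤ n' → n' < N → R n' l ≤ R n l) := by
  have hμθs : 0 < μ + θs := by linarith
  have hγform : ∀ k, m ≤ k → γ k = (m : ℝ) * (μ + θs) + ((k - m : ℕ) : ℝ) * θq := by
    intro k hk
    rw [hγ k, min_eq_right hk]
  have hγpos : ∀ k, m ≤ k → 0 < γ k := by
    intro k hk
    rw [hγform k hk]
    have : (0:ℝ) < (m:ℝ) * (μ + θs) := by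
      apply mul_pos _ hμθs
      exact_mod_cast Nat.lt_of_lt_of_le Nat.zero_lt_one hm
    have : (0:ℝ) ≤ ((k - m : ℕ) : ℝ) * θq :=
      mul_nonneg (Nat.cast_nonneg _) hθq.le
    linarith
  have hγmono : ∀ k k', m ≤ k → k ≤ k' → γ k ≤ γ k' := by
    intro k k' hk hkk
    rw [hγform k hk, hγform k' (le_trans hk hkk)]
    have h1 : ((k - m : ℕ) : ℝ) ≤ ((k' - m : ℕ) : ℝ) := by
      exact_mod_cast Nat.sub_le_sub_right hkk m
    nlinarith
  have key : ∀ n n' : ℕ, m - 1 ≤ n → n ≤ n' →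
      (γ (n + 1) - γ m) / γ (n + 1) ≤ (γ (n' + 1) - γ m) / γ (n' + 1) := by
    intro n n' hn hnn
    have hmn : m ≤ n + 1 := by omega
    have hmn' : m ≤ n' + 1 := by omega
    have p1 := hγpos _ hmn
    have p2 := hγpos _ hmn'
    have pm := hγpos m le_rfl
    have hle : γ (n + 1) ≤ γ (n' + 1) := hγmono _ _ hmn (by omega)
    rw [sub_div, sub_div, div_self p1.ne', div_self p2.ne']
    have : γ m / γ (n' + 1) ≤ γ m / γ (n + 1) :=
      div_le_div_of_nonneg_left pm.le p1 hle
    linarith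
  have coefeq : ∀ k : ℕ, m ≤ k →
      γ m / γ k * Cs + (γ k - γ m) / γ k * Cq
        = Cs + (γ k - γ m) / γ k * (Cq - Cs) := by
    intro k hk
    have p := hγpos k hk
    field_simp
    ring
  have key2 : ∀ n n' : ℕ, m - 1 ≤ n → n ≤ n' →
      γ m / γ (n + 1) * Cs + (γ (n + 1) - γ m) / γ (n + 1) * Cq ≤
        γ m / γ (n' + 1) * Cs + (γ (n' + 1) - γ m) / γ (n' + 1) * Cq := by
    intro n n' hn hnn
    rw [coefeq _ (by omega), coefeq _ (by omega)]
    have := key n n' hn hnn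
    nlinarith
  have hmm : m - 1 + 1 = m := by omega
  have key3 : γ m / γ (m - 1 + 1) * Cs + (γ (m - 1 + 1) - γ m) / γ (m - 1 + 1) * Cq = Cs := by
    rw [hmm, div_self (hγpos m le_rfl).ne', sub_self, zero_div]
    ring
  refine ⟨key, key2, key3, ?_⟩
  intro l hl n n' hnn hn'N
  by_cases hn : n < m
  · by_cases hn' : n' < m
    · rw [hR1 n l hn, hR1 n' l hn']
    · push_neg at hn'
      rw [hR1 n l hn, hR2 n' l hn' hn'N]
      have h1 : Cs ≤ γ m / γ (n' + 1) * Cs + (γ (n' + 1) - γ m) / γ (n' + 1) * Cq := by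
        calc Cs = γ m / γ (m - 1 + 1) * Cs + (γ (m - 1 + 1) - γ m) / γ (m - 1 + 1) * Cq :=
              key3.symm
          _ ≤ _ := key2 (m - 1) n' le_rfl (by omega)
      nlinarith
  · push_neg at hn
    have hn' : m ≤ n' := le_trans hn hnn
    rw [hR2 n l hn (lt_of_le_of_lt hnn hn'N), hR2 n' l hn' hn'N]
    have h1 := key2 n n' (by omega) hnn
    nlinarith
end

section
/- Monotone dominance of idle-server probability: let λ⃗ = (λ_0,…,λ_{N-1}) with 0 ≤ λ_n ≤ Λ for all n, and let a_n(λ⃗) = ∏_{ℓ=1}^n λ_{ℓ-1}/γ_ℓ, a_n(Λ) = ∏_{ℓ=1}^n Λ/γ_ℓ (a_0 = 1 in both cases), with γ_ℓ > 0. Then Σ_{n=0}^{m-1} a_n(λ⃗)/Σ_{n=0}^{N} a_n(λ⃗) ≥ Σ_{n=0}^{m-1} a_n(Λ)/Σ_{n=0}^{N} a_n(Λ) ≥ Σ_{n=0}^{m-1} a_n(Λ)/Σ_{n=0}^{∞} a_n(Λ), where the last expression assumes the series Σ_{n=0}^{∞} a_n(Λ) converges. In words: the stationary probability that at most m−1 customers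 are present is minimized by using the maximal arrival rate Λ in every state. -/
/-- the stationary probability of having at most `m−1` customers is
minimized by the maximal arrival rate `Λ`, and further lower-bounded by the
infinite-buffer quantity. -/
theorem idle_prob_dominance
    (N m : ℕ) (hm : 1 ≤ m) (hmN : m ≤ N)
    (Λ : ℝ) (hΛ : 0 < Λ) (γ : ℕ → ℝ) (hγ : ∀ i, 1 ≤ i → 0 < γ i)
    (lam : ℕ → ℝ) (hlam : ∀ n, 0 ≤ lam n ∧ lam n ≤ Λ)
    (alam aLam : ℕ → ℝ)
    (halam : ∀ n, alam n = ∏ i ∈ Finset.Icc 1 n, lam (i - 1) / γ i)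
    (haLam : ∀ n, aLam n = ∏ i ∈ Finset.Icc 1 n, Λ / γ i)
    (hsum : Summable aLam) :
    ((∑ n ∈ Finset.range m, aLam n) / ∑ n ∈ Finset.range (N + 1), aLam n ≤
      (∑ n ∈ Finset.range m, alam n) / ∑ n ∈ Finset.range (N + 1), alam n) ∧
    ((∑ n ∈ Finset.range m, aLam n) / ∑' n, aLam n ≤
      (∑ n ∈ Finset.range m, aLam n) / ∑ n ∈ Finset.range (N + 1), aLam n) := by
  have halam_nonneg : ∀ n, 0 ≤ alam n := fun n => by
    rw [halam]
    exact Finset.prod_nonneg fun i hi =>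
      div_nonneg (hlam _).1 (hγ i (Finset.mem_Icc.mp hi).1).le
  have haLam_pos : ∀ n, 0 < aLam n := fun n => by
    rw [haLam]
    exact Finset.prod_pos fun i hi => div_pos hΛ (hγ i (Finset.mem_Icc.mp hi).1)
  have halam0 : alam 0 = 1 := by simp [halam]
  have key : ∀ n k, n ≤ k → aLam n * alam k ≤ alam n * aLam k := by
    intro n k hnk
    have hsplit : ∀ f : ℕ → ℝ, ∏ i ∈ Finset.Icc 1 k, f i =
        (∏ i ∈ Finset.Icc 1 n, f i) * ∏ i ∈ Finset.Ioc n k, f i := by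
      intro f
      rw [show (1:ℕ) = 0 + 1 from rfl, Finset.Icc_add_one_left_eq_Ioc, Finset.Icc_add_one_left_eq_Ioc]
      exact (Finset.prod_Ioc_consecutive f (Nat.zero_le n) hnk).symm
    rw [halam, halam, haLam, haLam, hsplit, hsplit]
    set A := ∏ i ∈ Finset.Icc 1 n, lam (i-1)/γ i with hA
    set B := ∏ i ∈ Finset.Icc 1 n, Λ/γ i with hB
    set P := ∏ i ∈ Finset.Ioc n k, lam (i-1)/γ i with hP
    set Q := ∏ i ∈ Finset.Ioc n k, Λ/γ i with hQ
    have hA0 : 0 ≤ A := Finset.prod_nonneg fun i hi =>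
      div_nonneg (hlam _).1 (hγ i (Finset.mem_Icc.mp hi).1).le
    have hB0 : 0 ≤ B := Finset.prod_nonneg fun i hi =>
      div_nonneg hΛ.le (hγ i (Finset.mem_Icc.mp hi).1).le
    have hPQ : P ≤ Q := by
      apply Finset.prod_le_prod
      · intro i hi
        have h1 : 1 ≤ i := by have := (Finset.mem_Ioc.mp hi).1; omega
        exact div_nonneg (hlam _).1 (hγ i h1).le
      · intro i hi
        have h1 : 1 ≤ i := by have := (Finset.mem_Ioc.mp hi).1; omega
        have hg := hγ i h1
        exact (div_le_div_iff_of_pos_right hg).mpr (hlam _).2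
    calc B * (A * P) = (A * B) * P := by ring
      _ ≤ (A * B) * Q := mul_le_mul_of_nonneg_left hPQ (mul_nonneg hA0 hB0)
      _ = A * (B * Q) := by ring
  have hsplitsum : ∀ f : ℕ → ℝ, ∑ n ∈ Finset.range (N+1), f n =
      (∑ n ∈ Finset.range m, f n) + ∑ n ∈ Finset.Ico m (N+1), f n := by
    intro f
    simp only [Finset.range_eq_Ico]
    exact (Finset.sum_Ico_consecutive f (Nat.zero_le m) (by omega)).symm
  have hAmpos : 0 < ∑ n ∈ Finset.range m, alam n := by
    have h1 : alam 0 ≤ ∑ n ∈ Finset.range m, alam n :=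
      Finset.single_le_sum (fun i _ => halam_nonneg i) (Finset.mem_range.mpr hm)
    linarith [halam0 ▸ h1]
  have hBnn : 0 ≤ ∑ n ∈ Finset.Ico m (N+1), alam n :=
    Finset.sum_nonneg fun i _ => halam_nonneg i
  have hCpos : 0 < ∑ n ∈ Finset.range m, aLam n :=
    Finset.sum_pos (fun i _ => haLam_pos i) ⟨0, Finset.mem_range.mpr hm⟩
  have hDnn : 0 ≤ ∑ n ∈ Finset.Ico m (N+1), aLam n :=
    Finset.sum_nonneg fun i _ => (haLam_pos i).le
  constructor
  · rw [hsplitsum alam, hsplitsum aLam, div_le_div_iff₀ (by linarith) (by linarith)]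
    have hCB : (∑ n ∈ Finset.range m, aLam n) * ∑ k ∈ Finset.Ico m (N+1), alam k ≤
        (∑ n ∈ Finset.range m, alam n) * ∑ k ∈ Finset.Ico m (N+1), aLam k := by
      rw [Finset.mul_sum, Finset.mul_sum]
      apply Finset.sum_le_sum
      intro k hk
      rw [Finset.sum_mul, Finset.sum_mul]
      apply Finset.sum_le_sum
      intro n hn
      have hnm := Finset.mem_range.mp hn
      have hkm := (Finset.mem_Ico.mp hk).1
      exact key n k (by omega)
    nlinarith [hCB]
  · have hS : (∑ n ∈ Finset.range (N+1), aLam n) ≤ ∑' n, aLam n :=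
      Summable.sum_le_tsum _ (fun i _ => (haLam_pos i).le) hsum
    have hSpos : 0 < ∑ n ∈ Finset.range (N+1), aLam n :=
      Finset.sum_pos (fun i _ => haLam_pos i) ⟨0, by simp⟩
    gcongr
end

section
/- Revenue bound for the cutoff-static heuristic: assume λ ↦ λF̄⁻¹(λ/Λ) is concave and nonnegative on [0,Λ]. Let δ̂ = Σ_n λ_n* P_n(λ⃗*) be the effective arrival rate of the optimal policy, R* = Σ_n λ_n* F̄⁻¹(λ_n*/Λ) P_n(λ⃗*) its revenue, and for threshold K let B(δ) = a_K(δ)/Σ_{n=0}^K a_n(δ) be the blocking probability with a_n(δ) = δ^n/∏_{i=1}^n γ_i. Then the cutoff-static revenue δ̂F̄⁻¹(δ̂/Λ)(1 − B(δ̂)) is at least R*·(1 − B(Λ)). (Uses: δ̂F̄⁻¹(δ̂/Λ) ≥ R* by Jensen, and B(δ̂) ≤ B(Λ) since B is non-decreasing in δ.) -/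
/-- revenue bound for the cutoff-static heuristic: the cutoff-static
revenue at the effective rate `δ̂` dominates `R*·(1 − B(Λ))`. -/
theorem cutoff_revenue_bound
    (N K : ℕ) (hK : 1 ≤ K)
    (Λ : ℝ) (hΛ : 0 < Λ)
    (γ : ℕ → ℝ) (hγ : ∀ i, 1 ≤ i → i ≤ K → 0 < γ i)
    (Fbarinv : ℝ → ℝ)
    (hconc : ConcaveOn ℝ (Set.Icc 0 Λ) (fun x : ℝ => x * Fbarinv (x / Λ)))
    (hnonneg : ∀ x ∈ Set.Icc (0 : ℝ) Λ, 0 ≤ x * Fbarinv (x / Λ))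
    (P lam : ℕ → ℝ) (hP : ∀ n, 0 ≤ P n)
    (hP1 : ∑ n ∈ Finset.range (N + 1), P n = 1)
    (hlam : ∀ n, lam n ∈ Set.Icc (0 : ℝ) Λ) (hlamN : lam N = 0)
    (δ Rstar : ℝ)
    (hδ : δ = ∑ n ∈ Finset.range (N + 1), lam n * P n)
    (hRstar : Rstar = ∑ n ∈ Finset.range (N + 1), lam n * Fbarinv (lam n / Λ) * P n)
    (B : ℝ → ℝ)
    (hB : ∀ x : ℝ, B x = (x ^ K / ∏ i ∈ Finset.Icc 1 K, γ i) /
        ∑ n ∈ Finset.range (K + 1), x ^ n / ∏ i ∈ Finset.Icc 1 n, γ i) :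
    Rstar * (1 - B Λ) ≤ δ * Fbarinv (δ / Λ) * (1 - B δ) := by
  have hcpos : ∀ n, n ≤ K → 0 < ∏ i ∈ Finset.Icc 1 n, γ i := by
    intro n hn
    apply Finset.prod_pos
    intro i hi
    simp only [Finset.mem_Icc] at hi
    exact hγ i hi.1 (hi.2.trans hn)
  have hSpos : ∀ x : ℝ, 0 ≤ x →
      0 < ∑ n ∈ Finset.range (K + 1), x ^ n / ∏ i ∈ Finset.Icc 1 n, γ i := by
    intro x hx
    apply Finset.sum_pos'
    · intro n hn
      exact div_nonneg (pow_nonneg hx n) (hcpos n (Finset.mem_range_succ_iff.mp hn)).le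
    · refine ⟨0, Finset.mem_range.mpr (by omega), ?_⟩
      simp
  -- δ is in [0, Λ]
  have hδmem : δ ∈ Set.Icc (0 : ℝ) Λ := by
    rw [hδ]
    have := (convex_Icc (0 : ℝ) Λ).sum_mem (t := Finset.range (N + 1))
      (fun n _ => hP n) hP1 (fun n _ => hlam n)
    have e : (∑ n ∈ Finset.range (N + 1), P n • lam n)
        = ∑ n ∈ Finset.range (N + 1), lam n * P n :=
      Finset.sum_congr rfl (fun n _ => by simp [mul_comm])
    rwa [e] at this
  -- Jensen: Rstar ≤ δ * Fbarinv (δ/Λ)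
  have hJ : Rstar ≤ δ * Fbarinv (δ / Λ) := by
    have h := hconc.le_map_sum (fun n _ => hP n) hP1 (fun n _ => hlam n)
      (t := Finset.range (N + 1))
    have e1 : (∑ n ∈ Finset.range (N + 1), P n • lam n) = δ := by
      rw [hδ]; exact Finset.sum_congr rfl (fun n _ => by simp [mul_comm])
    have e2 : (∑ n ∈ Finset.range (N + 1),
        P n • (lam n * Fbarinv (lam n / Λ))) = Rstar := by
      rw [hRstar]
      exact Finset.sum_congr rfl (fun n _ => by simp [smul_eq_mul]; ring)
    rw [e1, e2] at h
    exact h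
  have hδF : 0 ≤ δ * Fbarinv (δ / Λ) := hnonneg δ hδmem
  -- monotonicity of B
  have hBmono : B δ ≤ B Λ := by
    rw [hB, hB]
    rw [div_le_div_iff₀ (hSpos δ hδmem.1) (hSpos Λ hΛ.le)]
    rw [Finset.mul_sum, Finset.mul_sum]
    apply Finset.sum_le_sum
    intro n hn
    have hnK := Finset.mem_range_succ_iff.mp hn
    have hx : (0:ℝ) ≤ δ := hδmem.1
    have hxy : δ ≤ Λ := hδmem.2
    have key : δ ^ K * Λ ^ n ≤ Λ ^ K * δ ^ n := by
      have h1 : δ ^ K = δ ^ n * δ ^ (K - n) := by rw [← pow_add]; congr 1; omega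
      have h2 : Λ ^ K = Λ ^ n * Λ ^ (K - n) := by rw [← pow_add]; congr 1; omega
      rw [h1, h2]
      have h3 : δ ^ (K - n) ≤ Λ ^ (K - n) := pow_le_pow_left₀ hx hxy _
      have h4 : δ ^ n * Λ ^ n * δ ^ (K - n) ≤ δ ^ n * Λ ^ n * Λ ^ (K - n) :=
        mul_le_mul_of_nonneg_left h3
          (mul_nonneg (pow_nonneg hx n) (pow_nonneg hΛ.le n))
      nlinarith
    have hcK := hcpos K le_rfl
    have hcn := hcpos n hnK
    rw [div_mul_div_comm, div_mul_div_comm]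
    gcongr
  -- B Λ ≤ 1
  have hBΛ1 : B Λ ≤ 1 := by
    rw [hB]
    rw [div_le_one (hSpos Λ hΛ.le)]
    apply Finset.single_le_sum (f := fun n => Λ ^ n / ∏ i ∈ Finset.Icc 1 n, γ i)
    · intro n hn
      exact div_nonneg (pow_nonneg hΛ.le n)
        (hcpos n (Finset.mem_range_succ_iff.mp hn)).le
    · exact Finset.mem_range.mpr (by omega)
  have hRstar0 : 0 ≤ Rstar := by
    rw [hRstar]
    apply Finset.sum_nonneg
    intro n _
    exact mul_nonneg (hnonneg (lam n) (hlam n)) (hP n)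
  calc Rstar * (1 - B Λ) ≤ (δ * Fbarinv (δ / Λ)) * (1 - B Λ) :=
        mul_le_mul_of_nonneg_right hJ (by linarith)
    _ ≤ δ * Fbarinv (δ / Λ) * (1 - B δ) :=
        mul_le_mul_of_nonneg_left (by linarith) hδF
end

section
/- Upper bound on the optimal gain when C_s ≤ C_q: if λ ↦ λF̄⁻¹(λ/Λ) is concave on [0,Λ] and C_s ≤ C_q, then for any policy λ⃗ with rates in [0,Λ] and λ_N = 0 and stationary distribution (P_n), the gain Σ_{n=0}^{N-1} R_n(λ_n) P_n is at most R̃_s := max_{λ∈[0,Λ]} {λF̄⁻¹(λ/Λ) − λC_s}. (Proof: R_n(λ) ≤ λF̄⁻¹(λ/Λ) − λC_s pointwise since each cost coefficient is a convex combination of C_s and C_q lying in [C_s, C_q], then apply Jensen at the effective rate δ̂ = Σ λ_n P_n.) -/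
lemma affine_concave (c : ℝ) (s : Set ℝ) (hs : Convex ℝ s) :
    ConcaveOn ℝ s (fun x : ℝ => -(x * c)) := by
  refine ⟨hs, fun x _ y _ a b _ _ hab => ?_⟩
  simp only [smul_eq_mul]
  ring_nf
  nlinarith [hab]

/-- upper bound on the gain of any policy by the myopic service
reward `R̃_s` when `C_s ≤ C_q` and demand is regular. -/
theorem gain_upper_bound
    (N m : ℕ) (hm : 1 ≤ m) (hmN : m ≤ N)
    (μ θs θq Λ : ℝ) (hμ : 0 < μ) (hθq : 0 < θq) (hθs : 0 ≤ θs) (hΛ : 0 < Λ)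
    (Fbarinv : ℝ → ℝ)
    (hconc : ConcaveOn ℝ (Set.Icc 0 Λ) (fun x : ℝ => x * Fbarinv (x / Λ)))
    (γ : ℕ → ℝ)
    (hγ : ∀ n, γ n = ((min n m : ℕ) : ℝ) * (μ + θs) + ((n - m : ℕ) : ℝ) * θq)
    (Cs Cq : ℝ) (hC : Cs ≤ Cq)
    (R : ℕ → ℝ → ℝ)
    (hR1 : ∀ n l, n < m → R n l = l * Fbarinv (l / Λ) - l * Cs)
    (hR2 : ∀ n l, m ≤ n → n < N → R n l =
      l * Fbarinv (l / Λ)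
        - l * (γ m / γ (n + 1) * Cs + (γ (n + 1) - γ m) / γ (n + 1) * Cq))
    (Rs : ℝ)
    (hRs : IsGreatest ((fun l : ℝ => l * Fbarinv (l / Λ) - l * Cs) '' Set.Icc 0 Λ) Rs)
    (lam : ℕ → ℝ) (hlam : ∀ n, lam n ∈ Set.Icc (0 : ℝ) Λ) (hlamN : lam N = 0)
    (P : ℕ → ℝ) (hP : ∀ n, 0 ≤ P n)
    (hP1 : ∑ n ∈ Finset.range (N + 1), P n = 1) :
    ∑ n ∈ Finset.range N, R n (lam n) * P n ≤ Rs := by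
  set g : ℝ → ℝ := fun l => l * Fbarinv (l / Λ) - l * Cs with hg
  have hgconc : ConcaveOn ℝ (Set.Icc 0 Λ) g := by
    have := hconc.add (affine_concave Cs _ (convex_Icc 0 Λ))
    exact this.congr (fun x _ => by simp only [hg, Pi.add_apply]; ring)
  -- pointwise bound : R n l ≤ g l for l ∈ Icc, n < N
  have hpt : ∀ n, n < N → R n (lam n) ≤ g (lam n) := by
    intro n hn
    have hl0 : 0 ≤ lam n := (hlam n).1
    rcases lt_or_ge n m with h | h
    · rw [hR1 n _ h]
    · rw [hR2 n _ h hn, hg]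
      have hmin : min (n + 1) m = m := min_eq_right (by omega)
      have hsub : ((n + 1 - m : ℕ) : ℝ) = (n : ℝ) + 1 - m := by
        push_cast [Nat.cast_sub (by omega : m ≤ n + 1)]; ring
      have hγn1 : γ (n + 1) = (m : ℝ) * (μ + θs) + ((n : ℝ) + 1 - m) * θq := by
        rw [hγ, hmin, hsub]
      have hγm : γ m = (m : ℝ) * (μ + θs) := by
        rw [hγ]; simp
      have hmpos : (0:ℝ) < m := by exact_mod_cast hm
      have hd : 0 ≤ (n : ℝ) + 1 - m := by
        have : (m:ℝ) ≤ n := by exact_mod_cast h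
        linarith
      have hγpos : 0 < γ (n + 1) := by
        rw [hγn1]; nlinarith
      have hcoef : Cs ≤ γ m / γ (n + 1) * Cs + (γ (n + 1) - γ m) / γ (n + 1) * Cq := by
        have hdiff : 0 ≤ γ (n + 1) - γ m := by rw [hγn1, hγm]; nlinarith
        have key : γ m / γ (n + 1) * Cs + (γ (n + 1) - γ m) / γ (n + 1) * Cq - Cs
            = (γ (n + 1) - γ m) / γ (n + 1) * (Cq - Cs) := by
          field_simp; ring
        nlinarith [mul_nonneg (div_nonneg hdiff hγpos.le) (sub_nonneg.2 hC)]
      simp only [sub_le_sub_iff_left]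
      exact mul_le_mul_of_nonneg_left hcoef hl0
  have hsum1 : ∑ n ∈ Finset.range N, R n (lam n) * P n
      ≤ ∑ n ∈ Finset.range N, P n • g (lam n) := by
    apply Finset.sum_le_sum
    intro n hn
    rw [smul_eq_mul, mul_comm (P n)]
    exact mul_le_mul_of_nonneg_right (hpt n (Finset.mem_range.1 hn)) (hP n)
  have hg0 : g 0 = 0 := by simp [hg]
  have hsum2 : ∑ n ∈ Finset.range N, P n • g (lam n)
      = ∑ n ∈ Finset.range (N + 1), P n • g (lam n) := by
    rw [Finset.sum_range_succ, hlamN, hg0, smul_zero, add_zero]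
  have hjensen : ∑ n ∈ Finset.range (N + 1), P n • g (lam n)
      ≤ g (∑ n ∈ Finset.range (N + 1), P n • lam n) :=
    hgconc.le_map_sum (fun i _ => hP i) hP1 (fun i _ => hlam i)
  have hmem : (∑ n ∈ Finset.range (N + 1), P n • lam n) ∈ Set.Icc 0 Λ := by
    constructor
    · exact Finset.sum_nonneg fun i _ => smul_nonneg (hP i) (hlam i).1
    · calc ∑ n ∈ Finset.range (N + 1), P n • lam n
          ≤ ∑ n ∈ Finset.range (N + 1), P n • Λ :=
            Finset.sum_le_sum fun i _ =>
              smul_le_smul_of_nonneg_left (hlam i).2 (hP i)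
        _ = Λ := by rw [← Finset.sum_smul, hP1, one_smul]
  have := hRs.2 ⟨_, hmem, rfl⟩
  calc ∑ n ∈ Finset.range N, R n (lam n) * P n
      ≤ g (∑ n ∈ Finset.range (N + 1), P n • lam n) := by
        rw [hsum2] at hsum1; exact hsum1.trans hjensen
    _ ≤ Rs := this
end

section
/- Two-price optimality gap when C_s ≤ C_q: with R̃_s = max_λ {λF̄⁻¹(λ/Λ) − λC_s} and R̃_q = max_λ {λF̄⁻¹(λ/Λ) − λC_q} (maxima over [0,Λ]), let π be the two-price policy using the maximizer δ̃_s in states 0..m−1 and δ̃_q in states m..N−1, with stationary distribution giving P_s^T = Σ_{n<m} P_n, P_q^T = Σ_{m≤n<N} P_n, P_N^T = P_N. Then the gain of π is at least R̃_s P_s^T + R̃_q P_q^T, and hence g* − g_T* ≤ (R̃_s − R̃_q) P_q^T + R̃_s P_N^T, where g* ≤ R̃_s is the optimal gain and g_T* is the best two-price gain. -/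
/-- two-price optimality gap when `C_s ≤ C_q`: the two-price policy's
gain is at least `R̃_s·P_s^T + R̃_q·P_q^T`, hence
`g* − g_T* ≤ (R̃_s − R̃_q)·P_q^T + R̃_s·P_N^T`. -/
theorem two_price_gap
    (N m : ℕ) (hm : 1 ≤ m) (hmN : m ≤ N)
    (μ θs θq Λ : ℝ) (hμ : 0 < μ) (hθq : 0 < θq) (hθs : 0 ≤ θs) (hΛ : 0 < Λ)
    (Fbarinv : ℝ → ℝ)
    (hconc : ConcaveOn ℝ (Set.Icc 0 Λ) (fun x : ℝ => x * Fbarinv (x / Λ)))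
    (γ : ℕ → ℝ)
    (hγ : ∀ n, γ n = ((min n m : ℕ) : ℝ) * (μ + θs) + ((n - m : ℕ) : ℝ) * θq)
    (Cs Cq : ℝ) (hC : Cs ≤ Cq)
    (R : ℕ → ℝ → ℝ)
    (hR1 : ∀ n l, n < m → R n l = l * Fbarinv (l / Λ) - l * Cs)
    (hR2 : ∀ n l, m ≤ n → n < N → R n l =
      l * Fbarinv (l / Λ)
        - l * (γ m / γ (n + 1) * Cs + (γ (n + 1) - γ m) / γ (n + 1) * Cq))
    (Rs Rq ds dq : ℝ)
    (hRs : IsGreatest ((fun l : ℝ => l * Fbarinv (l / Λ) - l * Cs) '' Set.Icc 0 Λ) Rs)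
    (hRq : IsGreatest ((fun l : ℝ => l * Fbarinv (l / Λ) - l * Cq) '' Set.Icc 0 Λ) Rq)
    (hds : ds ∈ Set.Icc (0 : ℝ) Λ ∧ ds * Fbarinv (ds / Λ) - ds * Cs = Rs)
    (hdq : dq ∈ Set.Icc (0 : ℝ) Λ ∧ dq * Fbarinv (dq / Λ) - dq * Cq = Rq)
    (pi : ℕ → ℝ)
    (hpi : ∀ n, pi n = if n < m then ds else if n < N then dq else 0)
    (P : ℕ → ℝ) (hP : ∀ n, 0 ≤ P n)
    (hP1 : ∑ n ∈ Finset.range (N + 1), P n = 1)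
    (PsT PqT PNT : ℝ)
    (hPsT : PsT = ∑ n ∈ Finset.range m, P n)
    (hPqT : PqT = ∑ n ∈ Finset.Ico m N, P n)
    (hPNT : PNT = P N)
    (gstar gT : ℝ)
    (hgstar : gstar ≤ Rs)
    (hgT : ∑ n ∈ Finset.range N, R n (pi n) * P n ≤ gT) :
    (Rs * PsT + Rq * PqT ≤ ∑ n ∈ Finset.range N, R n (pi n) * P n) ∧
    (gstar - gT ≤ (Rs - Rq) * PqT + Rs * PNT) := by
  have hdq0 : 0 ≤ dq := hdq.1.1
  -- key bound on the Ico part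
  have key : ∀ n ∈ Finset.Ico m N, Rq * P n ≤ R n (pi n) * P n := by
    intro n hn
    simp only [Finset.mem_Ico] at hn
    have hpin : pi n = dq := by
      rw [hpi]
      simp [Nat.not_lt.mpr hn.1, hn.2]
    rw [hpin, hR2 n dq hn.1 hn.2]
    have hγm : γ m = (m : ℝ) * (μ + θs) := by
      rw [hγ]; simp
    have hγn : γ (n + 1) = (m : ℝ) * (μ + θs) + ((n + 1 - m : ℕ) : ℝ) * θq := by
      rw [hγ]; congr 2
      simp [min_eq_right (by omega : m ≤ n + 1)]
    have hγmpos : 0 < γ m := by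
      rw [hγm]
      have : (1 : ℝ) ≤ (m : ℝ) := by exact_mod_cast hm
      nlinarith
    have hγnpos : 0 < γ (n + 1) := by
      rw [hγn, ← hγm]
      have : (0 : ℝ) ≤ ((n + 1 - m : ℕ) : ℝ) * θq := by positivity
      linarith
    have hcoef : γ m / γ (n + 1) * Cs + (γ (n + 1) - γ m) / γ (n + 1) * Cq ≤ Cq := by
      have h1 : γ m / γ (n + 1) * Cs ≤ γ m / γ (n + 1) * Cq := by
        apply mul_le_mul_of_nonneg_left hC (by positivity)
      have h2 : γ m / γ (n + 1) * Cq + (γ (n + 1) - γ m) / γ (n + 1) * Cq = Cq := by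
        field_simp
        ring
      linarith
    have hterm : dq * Fbarinv (dq / Λ) - dq * Cq ≤
        dq * Fbarinv (dq / Λ)
          - dq * (γ m / γ (n + 1) * Cs + (γ (n + 1) - γ m) / γ (n + 1) * Cq) := by
      have := mul_le_mul_of_nonneg_left hcoef hdq0
      linarith
    have : Rq ≤ dq * Fbarinv (dq / Λ)
        - dq * (γ m / γ (n + 1) * Cs + (γ (n + 1) - γ m) / γ (n + 1) * Cq) := by
      rw [← hdq.2]; exact hterm
    exact mul_le_mul_of_nonneg_right this (hP n)
  have hsplit : ∑ n ∈ Finset.range N, R n (pi n) * P n =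
      ∑ n ∈ Finset.range m, R n (pi n) * P n + ∑ n ∈ Finset.Ico m N, R n (pi n) * P n := by
    rw [Finset.range_eq_Ico, ← Finset.sum_Ico_consecutive _ (Nat.zero_le m) hmN, Finset.range_eq_Ico]
  have hfirst : ∑ n ∈ Finset.range m, R n (pi n) * P n = Rs * PsT := by
    rw [hPsT, Finset.mul_sum]
    apply Finset.sum_congr rfl
    intro n hn
    simp only [Finset.mem_range] at hn
    have hpin : pi n = ds := by rw [hpi]; simp [hn]
    rw [hpin, hR1 n ds hn, hds.2]
  have hIco : Rq * PqT ≤ ∑ n ∈ Finset.Ico m N, R n (pi n) * P n := by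
    rw [hPqT, Finset.mul_sum]
    exact Finset.sum_le_sum key
  have part1 : Rs * PsT + Rq * PqT ≤ ∑ n ∈ Finset.range N, R n (pi n) * P n := by
    rw [hsplit, hfirst]
    linarith
  refine ⟨part1, ?_⟩
  have hsum : PsT + PqT + PNT = 1 := by
    rw [hPsT, hPqT, hPNT, ← hP1, Finset.sum_range_succ]
    rw [Finset.range_eq_Ico, Finset.range_eq_Ico, ← Finset.sum_Ico_consecutive _ (Nat.zero_le m) hmN]
  have hgT' : Rs * PsT + Rq * PqT ≤ gT := le_trans part1 hgT
  have hRsSum : Rs * PsT + Rs * PqT + Rs * PNT = Rs := by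
    linear_combination Rs * hsum
  linarith
end
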